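/- Let 2 < α < 4 and define u_α(y) = [α/((α−1)3^{α−1})]·(1/y)·[(1+y)^{α−1} − (1−2y)^{α−1}] for y ∈ (0, 1/2]. Then u_α is strictly decreasing on (0, 1/2), i.e., u_α′(y) < 0 for all y ∈ (0, 1/2). -/

import Mathlib

/-!
With `β = α - 2` and `C = α / ((α - 1) 3^(α - 1)) > 0`, a direct computation gives
`u_α'(y) = C · w(y) / y²` where `w(y) = (1+y)^β (βy - 1) + (1-2y)^β (1 + 2βy)`.
Now `w(0) = 0`, `w(1/2) ≤ 0` and `w'(y) = β(β+1) y D(y)` with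
`D(y) = (1+y)^(β-1) - 4(1-2y)^(β-1)`. Once `D` is nonnegative it stays positive (for `β ≤ 1`
it is always negative, for `β > 1` it is increasing), so `w` first decreases and then increases
on `[0, 1/2]`, which forces `w < 0` strictly inside.
-/

noncomputable section

/-- The function u_α. -/
def uFun (α : ℝ) (y : ℝ) : ℝ :=
  α / ((α - 1) * (3:ℝ) ^ (α - 1)) * (1/y) * ((1 + y) ^ (α - 1) - (1 - 2*y) ^ (α - 1))

open Real Set

theorem neg_of_endpoints_nonpos_of_deriv_nonneg_imp_pos {f : ℝ → ℝ} {a b : ℝ}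
    (hf : ContinuousOn f (Icc a b)) (ha : f a ≤ 0) (hb : f b ≤ 0)
    (hf' : ∀ x ∈ Ioo a b, 0 ≤ deriv f x → ∀ z ∈ Ioo x b, 0 < deriv f z) :
    ∀ y ∈ Ioo a b, f y < 0 := by
  intro y ⟨hay, hyb⟩
  by_cases hcross : ∃ x ∈ Ioo a y, 0 ≤ deriv f x
  · obtain ⟨x, ⟨hax, hxy⟩, hx⟩ := hcross
    have hmono : StrictMonoOn f (Icc y b) := by
      refine strictMonoOn_of_deriv_pos (convex_Icc y b) (hf.mono (Icc_subset_Icc hay.le le_rfl)) ?_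
      rw [interior_Icc]
      exact fun z hz => hf' x ⟨hax, hxy.trans hyb⟩ hx z ⟨hxy.trans hz.1, hz.2⟩
    exact (hmono (left_mem_Icc.2 hyb.le) (right_mem_Icc.2 hyb.le) hyb).trans_le hb
  · push Not at hcross
    have hanti : StrictAntiOn f (Icc a y) := by
      refine strictAntiOn_of_deriv_neg (convex_Icc a y) (hf.mono (Icc_subset_Icc le_rfl hyb.le)) ?_
      rw [interior_Icc]
      exact hcross
    exact (hanti (left_mem_Icc.2 hay.le) (right_mem_Icc.2 hay.le) hay).trans_le ha

def wFun (β y : ℝ) : ℝ :=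
  (1 + y) ^ β * (β * y - 1) + (1 - 2 * y) ^ β * (1 + 2 * β * y)

def wDerivFactor (β y : ℝ) : ℝ :=
  (1 + y) ^ (β - 1) - 4 * (1 - 2 * y) ^ (β - 1)

section wFun

variable {β : ℝ}

theorem hasDerivAt_wFun {y : ℝ} (h₁ : 1 + y ≠ 0) (h₂ : 1 - 2 * y ≠ 0) :
    HasDerivAt (wFun β) (β * (β + 1) * y * wDerivFactor β y) y := by
  have hA : HasDerivAt (fun y : ℝ => (1 + y) ^ β) (1 * β * (1 + y) ^ (β - 1)) y :=
    ((hasDerivAt_id y).const_add 1).rpow_const (Or.inl h₁)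
  have hB : HasDerivAt (fun y : ℝ => (1 - 2 * y) ^ β) (-(2 * 1) * β * (1 - 2 * y) ^ (β - 1)) y :=
    (((hasDerivAt_id y).const_mul 2).const_sub 1).rpow_const (Or.inl h₂)
  have hL₁ : HasDerivAt (fun y : ℝ => β * y - 1) (β * 1) y :=
    ((hasDerivAt_id y).const_mul β).sub_const 1
  have hL₂ : HasDerivAt (fun y : ℝ => 1 + 2 * β * y) (2 * β * 1) y :=
    ((hasDerivAt_id y).const_mul (2 * β)).const_add 1
  refine ((hA.mul hL₁).add (hB.mul hL₂)).congr_deriv ?_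
  have e₁ : (1 + y) ^ β = (1 + y) ^ (β - 1) * (1 + y) := by
    rw [← rpow_add_one h₁, sub_add_cancel]
  have e₂ : (1 - 2 * y) ^ β = (1 - 2 * y) ^ (β - 1) * (1 - 2 * y) := by
    rw [← rpow_add_one h₂, sub_add_cancel]
  rw [e₁, e₂, wDerivFactor]
  ring

theorem continuous_wFun (hβ : 0 ≤ β) : Continuous (wFun β) := by
  unfold wFun
  fun_prop (disch := exact Or.inr hβ)

theorem wFun_zero : wFun β 0 = 0 := by
  simp [wFun]

theorem wFun_half_nonpos (hβ : β ≤ 2) : wFun β (1 / 2) ≤ 0 := by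
  rcases eq_or_ne β 0 with rfl | hβ₀
  · norm_num [wFun]
  · have : wFun β (1 / 2) = (3 / 2 : ℝ) ^ β * (β / 2 - 1) := by
      norm_num [wFun, zero_rpow hβ₀, div_eq_mul_one_div β 2]
    rw [this]
    exact mul_nonpos_of_nonneg_of_nonpos (by positivity) (by linarith)

theorem wDerivFactor_neg (hβ : β ≤ 1) {y : ℝ} (hy : y ∈ Ico (0 : ℝ) (1 / 2)) :
    wDerivFactor β y < 0 := by
  have h₁ : (1 + y) ^ (β - 1) ≤ 1 :=
    rpow_le_one_of_one_le_of_nonpos (by linarith [hy.1]) (by linarith)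
  have h₂ : 1 ≤ (1 - 2 * y) ^ (β - 1) :=
    one_le_rpow_of_pos_of_le_one_of_nonpos (by linarith [hy.2]) (by linarith [hy.1]) (by linarith)
  rw [wDerivFactor]
  linarith

theorem wDerivFactor_strictMonoOn (hβ : 1 < β) : StrictMonoOn (wDerivFactor β) (Icc 0 (1 / 2)) := by
  intro a ha b hb hab
  have h₁ : (1 + a) ^ (β - 1) < (1 + b) ^ (β - 1) :=
    rpow_lt_rpow (by linarith [ha.1]) (by linarith) (by linarith)
  have h₂ : (1 - 2 * b) ^ (β - 1) ≤ (1 - 2 * a) ^ (β - 1) :=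
    rpow_le_rpow (by linarith [hb.2]) (by linarith) (by linarith)
  simp only [wDerivFactor]
  linarith

theorem wDerivFactor_pos_of_nonneg {x : ℝ} (hx : x ∈ Ioo (0 : ℝ) (1 / 2))
    (hx₀ : 0 ≤ wDerivFactor β x) : ∀ z ∈ Ioo x (1 / 2), 0 < wDerivFactor β z := by
  intro z hz
  rcases le_or_gt β 1 with hβ | hβ
  · exact absurd hx₀ (wDerivFactor_neg hβ (Ioo_subset_Ico_self hx)).not_ge
  · exact hx₀.trans_lt <| wDerivFactor_strictMonoOn hβ (Ioo_subset_Icc_self hx)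
      ⟨hx.1.le.trans hz.1.le, hz.2.le⟩ hz.1

theorem wFun_neg (hβ₀ : 0 < β) (hβ₂ : β ≤ 2) : ∀ y ∈ Ioo (0 : ℝ) (1 / 2), wFun β y < 0 := by
  have hderiv : ∀ y ∈ Ioo (0 : ℝ) (1 / 2), deriv (wFun β) y = β * (β + 1) * y * wDerivFactor β y :=
    fun y hy => (hasDerivAt_wFun (by linarith [hy.1]) (by linarith [hy.2])).deriv
  have hscale : ∀ y ∈ Ioo (0 : ℝ) (1 / 2), 0 < β * (β + 1) * y :=
    fun y hy => by have := hy.1; positivity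
  refine neg_of_endpoints_nonpos_of_deriv_nonneg_imp_pos (continuous_wFun hβ₀.le).continuousOn
    wFun_zero.le (wFun_half_nonpos hβ₂) fun x hx hx₀ z hz => ?_
  have hz' : z ∈ Ioo (0 : ℝ) (1 / 2) := ⟨hx.1.trans hz.1, hz.2⟩
  rw [hderiv x hx] at hx₀
  rw [hderiv z hz']
  exact mul_pos (hscale z hz')
    (wDerivFactor_pos_of_nonneg hx (nonneg_of_mul_nonneg_right hx₀ (hscale x hx)) z hz)

end wFun

theorem hasDerivAt_uFun {α y : ℝ} (hy : y ≠ 0) (h₁ : 1 + y ≠ 0) (h₂ : 1 - 2 * y ≠ 0) :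
    HasDerivAt (uFun α) (α / ((α - 1) * (3:ℝ) ^ (α - 1)) / y ^ 2 * wFun (α - 2) y) y := by
  have hA : HasDerivAt (fun y : ℝ => (1 + y) ^ (α - 1)) (1 * (α - 1) * (1 + y) ^ (α - 1 - 1)) y :=
    ((hasDerivAt_id y).const_add 1).rpow_const (Or.inl h₁)
  have hB : HasDerivAt (fun y : ℝ => (1 - 2 * y) ^ (α - 1))
      (-(2 * 1) * (α - 1) * (1 - 2 * y) ^ (α - 1 - 1)) y :=
    (((hasDerivAt_id y).const_mul 2).const_sub 1).rpow_const (Or.inl h₂)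
  have hinv : HasDerivAt (fun y : ℝ => 1 / y) (-(y ^ 2)⁻¹) y := by
    simpa only [one_div] using hasDerivAt_inv hy
  refine ((hinv.const_mul _).mul (hA.sub hB)).congr_deriv ?_
  have e₁ : (1 + y) ^ (α - 1) = (1 + y) ^ (α - 2) * (1 + y) := by
    rw [← rpow_add_one h₁]; ring_nf
  have e₂ : (1 - 2 * y) ^ (α - 1) = (1 - 2 * y) ^ (α - 2) * (1 - 2 * y) := by
    rw [← rpow_add_one h₂]; ring_nf
  rw [Pi.sub_apply, show α - 1 - 1 = α - 2 by ring, e₁, e₂, wFun]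
  field_simp
  ring

/-- For 2 < α < 4, u_α is strictly decreasing on (0,1/2): its derivative is negative. -/
theorem uFun_deriv_neg (α : ℝ) (hα2 : 2 < α) (hα4 : α < 4) :
    ∀ y ∈ Set.Ioo (0:ℝ) (1/2), deriv (uFun α) y < 0 := by
  intro y hy
  have hC : 0 < α / ((α - 1) * (3:ℝ) ^ (α - 1)) / y ^ 2 :=
    div_pos (div_pos (by linarith) (mul_pos (by linarith) (by positivity))) (by positivity [hy.1])
  rw [(hasDerivAt_uFun hy.1.ne' (by linarith [hy.1]) (by linarith [hy.2])).deriv]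
  exact mul_neg_of_pos_of_neg hC (wFun_neg (by linarith) (by linarith) y hy)
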